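/- arXiv:2602.23130 — 5 statements merged into one kernel-verified Lean document; each statement's English description precedes it below -/
import Mathlib

section
/- Let q be a prime power, h,k ≥ 1, and α ∈ F_{q^h}. The h × (hk) matrix M_α whose (s,i) entry (0 ≤ s ≤ h-1, 0 ≤ i ≤ hk-1) is α^{i·q^s} has rank h (i.e., its rows are linearly independent over F_{q^h}) if and only if α generates F_{q^h} over F_q, that is F_q(α) = F_{q^h}. -/
/-!
Row `s` of the Moore matrix is the Vandermonde row of `φ^s α`, where `φ` is the `q`-Frobenius, so
(as `hk ≥ h`) the rows are independent iff `α, φ α, …, φ^(h-1) α` are distinct. These powers of `φ`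
exhaust `Gal(K/F_q)`, so this says that only the identity fixes `α`, which by the Galois
correspondence means `F_q(α) = K`.
-/

open IntermediateField

theorem Matrix.linearIndependent_pow_rows_iff_injective {K : Type*} [Field K] {n N : ℕ}
    (hnN : n ≤ N) (v : Fin n → K) :
    LinearIndependent K (fun s (i : Fin N) => v s ^ (i : ℕ)) ↔ Function.Injective v := by
  refine ⟨fun hli s t hst => hli.injective (by simp only [hst]), fun hv => ?_⟩
  have hvdm : LinearIndependent K (Matrix.vandermonde v).row := by
    rw [Matrix.linearIndependent_rows_iff_isUnit, Matrix.isUnit_iff_isUnit_det, isUnit_iff_ne_zero,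
      Matrix.det_vandermonde_ne_zero_iff]
    exact hv
  -- restricting to the first `n` columns gives the square Vandermonde matrix
  exact .of_comp (LinearMap.funLeft K K (Fin.castLE hnN)) hvdm

theorem IsGalois.injective_apply_iff_adjoin_simple_eq_top {F E : Type*} [Field F] [Field E]
    [Algebra F E] [FiniteDimensional F E] [IsGalois F E] (α : E) :
    Function.Injective (fun σ : Gal(E/F) => σ α) ↔ F⟮α⟯ = ⊤ := by
  have hfix : ∀ σ : Gal(E/F), σ ∈ fixingSubgroup F⟮α⟯ ↔ σ α = α := fun σ => by
    simpa using forall_mem_adjoin_smul_eq_self_iff F (S := {α}) σ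
  rw [← (IsGalois.intermediateFieldEquivSubgroup (F := F) (E := E)).injective.eq_iff]
  simp only [IsGalois.intermediateFieldEquivSubgroup_apply, fixingSubgroup_top,
    OrderDual.toDual_inj]
  refine ⟨fun hinj => (Subgroup.eq_bot_iff_forall _).2 fun σ hσ => hinj ((hfix σ).1 hσ), ?_⟩
  intro hbot σ τ hστ
  have hmem : τ⁻¹ * σ ∈ fixingSubgroup F⟮α⟯ := (hfix _).2 (by simp [AlgEquiv.mul_apply, hστ])
  rw [hbot, Subgroup.mem_bot, inv_mul_eq_one] at hmem
  exact hmem.symm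

theorem FiniteField.injective_pow_card_pow_iff_adjoin_simple_eq_top {F E : Type*} [Field F]
    [Fintype F] [Field E] [Finite E] [Algebra F E] (α : E) :
    Function.Injective (fun s : Fin (Module.finrank F E) => α ^ Fintype.card F ^ (s : ℕ)) ↔
      F⟮α⟯ = ⊤ := by
  rw [← IsGalois.injective_apply_iff_adjoin_simple_eq_top,
    ← Function.Injective.of_comp_iff' _ (bijective_frobeniusAlgEquivOfAlgebraic_pow F E)]
  congr!
  simp [AlgEquiv.coe_pow, coe_frobeniusAlgEquivOfAlgebraic_iterate]

theorem moore_matrix_rank_iff_generates_general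
    (Fq K : Type) [Field Fq] [Fintype Fq] [Field K] [Fintype K] [Algebra Fq K]
    (h k : ℕ) (hk0 : 0 < k)
    (hrank : Module.finrank Fq K = h) (α : K) :
    LinearIndependent K
        (fun s : Fin h => fun i : Fin (h * k) =>
          α ^ ((i : ℕ) * (Fintype.card Fq) ^ (s : ℕ)))
      ↔ IntermediateField.adjoin Fq {α} = ⊤ := by
  subst hrank
  simp_rw [mul_comm _ (Fintype.card Fq ^ _), pow_mul]
  rw [Matrix.linearIndependent_pow_rows_iff_injective (Nat.le_mul_of_pos_right _ hk0)]
  exact FiniteField.injective_pow_card_pow_iff_adjoin_simple_eq_top α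

/-- The rectangular q-Moore matrix of 1, α, …, α^{hk-1} has linearly
independent rows over F_{q^h} iff α generates F_{q^h} over F_q. -/
theorem moore_matrix_rank_iff_generates
    (Fq K : Type) [Field Fq] [Fintype Fq] [Field K] [Fintype K] [Algebra Fq K]
    (h k : ℕ) (hh : 0 < h) (hk0 : 0 < k)
    (hrank : Module.finrank Fq K = h) (α : K) :
    LinearIndependent K
        (fun s : Fin h => fun i : Fin (h * k) =>
          α ^ ((i : ℕ) * (Fintype.card Fq) ^ (s : ℕ)))
      ↔ IntermediateField.adjoin Fq {α} = ⊤ :=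
  moore_matrix_rank_iff_generates_general Fq K h k hk0 hrank α
end

section
/- Let q ≥ hk+1 be a prime power, and for each α ∈ F_{q^h} with F_q(α) = F_{q^h}, let v_α = (1, α, α², …, α^{hk-1}) ∈ F_{q^h}^{hk}. Let X(α) ⊆ F_q^{hk} (viewed as F_q-subspace of F_{q^h}^{hk}) be the intersection of span_{F_{q^h}}{v_α, v_α^{(q)}, …, v_α^{(q^{h-1})}} with F_q^{hk}, where v^{(q^s)} denotes coordinatewise q^s-power. Then X(α) is an F_q-subspace of dimension h. -/
/-!
Dedekind's independence of characters makes the Frobenius powers `x ↦ x ^ q ^ s`, `s < h`, a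
`K`-basis of `End_{F_q}(K)`. Evaluating endomorphisms at `1, α, …, α ^ (hk - 1)`, which span `K`
over `F_q`, identifies `End_{F_q}(K)` with the span of the conjugate vectors; a vector is
rational exactly when its endomorphism takes values in `F_q`, so the rational points form a copy
of the dual of `K`, which has dimension `h`.
-/

open Module

theorem span_range_pow_eq_top_of_adjoin_eq_top {F K : Type*} [Field F] [Field K] [Algebra F K]
    [FiniteDimensional F K] {α : K} (hα : IntermediateField.adjoin F {α} = ⊤) {n : ℕ}
    (hn : finrank F K ≤ n) :
    Submodule.span F (Set.range fun i : Fin n => α ^ (i : ℕ)) = ⊤ := by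
  have hint : IsIntegral F α := .of_finite F α
  let pb := PowerBasis.ofAdjoinEqTop hint
    ((IntermediateField.adjoin_simple_eq_top_iff_of_isAlgebraic hint.isAlgebraic).mp hα)
  rw [eq_top_iff, ← pb.basis.span_eq, pb.coe_basis]
  refine Submodule.span_mono (Set.range_subset_iff.mpr fun i => ⟨Fin.castLE ?_ i, rfl⟩)
  rwa [← pb.finrank]

theorem span_frobeniusAlgHom_pow_eq_top (F K : Type*) [Field F] [Fintype F] [Field K]
    [Algebra F K] [Finite K] :
    Submodule.span K (Set.range fun s : Fin (finrank F K) =>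
      ((FiniteField.frobeniusAlgHom F K) ^ (s : ℕ)).toLinearMap) = ⊤ :=
  ((linearIndependent_algHom_toLinearMap F K K).comp _
    (FiniteField.bijective_frobeniusAlgHom_pow F K).1).span_eq_top_of_card_eq_finrank'
    (by rw [Fintype.card_fin, finrank_linearMap_self])

section RationalPoints

variable {F K V ι : Type*} [Field F] [Field K] [Algebra F K] [AddCommGroup V] [Module F V]

variable (F K) in
def evalFamily (b : ι → V) : (V →ₗ[F] K) →ₗ[K] (ι → K) :=
  LinearMap.pi fun i => LinearMap.applyₗ' K (b i)

@[simp]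
theorem evalFamily_apply (b : ι → V) (M : V →ₗ[F] K) (i : ι) : evalFamily F K b M i = M (b i) :=
  rfl

theorem evalFamily_injective {b : ι → V} (hb : Submodule.span F (Set.range b) = ⊤) :
    Function.Injective (evalFamily F K b) := fun _ _ h =>
  LinearMap.ext_on_range hb fun i => congrFun h i

theorem exists_algebraLinearMap_comp_eq {b : ι → V} (hb : Submodule.span F (Set.range b) = ⊤)
    {M : V →ₗ[F] K} (hM : ∀ i, M (b i) ∈ (⊥ : Subalgebra F K)) :
    ∃ L : Dual F V, Algebra.linearMap F K ∘ₗ L = M := by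
  have hinj : Function.Injective (Algebra.linearMap F K) := (algebraMap F K).injective
  have hbot : ⊤ ≤ (Subalgebra.toSubmodule ⊥).comap M :=
    hb ▸ Submodule.span_le.mpr (Set.range_subset_iff.mpr hM)
  refine ⟨(LinearEquiv.ofInjective _ hinj).symm.toLinearMap ∘ₗ M.codRestrict _ fun v => ?_, ?_⟩
  · simpa [Algebra.mem_bot] using hbot (Submodule.mem_top (x := v))
  · ext v
    simp

theorem range_evalFamily_inf_pi_bot {b : ι → V} (hb : Submodule.span F (Set.range b) = ⊤) :
    (LinearMap.range (evalFamily F K b)).restrictScalars F ⊓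
        Submodule.pi Set.univ (fun _ : ι => Subalgebra.toSubmodule (⊥ : Subalgebra F K)) =
      LinearMap.range ((evalFamily F K b).restrictScalars F ∘ₗ
        LinearMap.compRight F (Algebra.linearMap F K)) := by
  ext x
  simp only [Submodule.mem_inf, Submodule.restrictScalars_mem, LinearMap.mem_range,
    Submodule.mem_pi, Set.mem_univ, forall_const, Subalgebra.mem_toSubmodule]
  constructor
  · rintro ⟨⟨M, rfl⟩, hM⟩
    obtain ⟨L, rfl⟩ := exists_algebraLinearMap_comp_eq hb hM
    exact ⟨L, rfl⟩
  · rintro ⟨L, rfl⟩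
    exact ⟨⟨LinearMap.compRight F (Algebra.linearMap F K) L, rfl⟩,
      fun i => Algebra.mem_bot.mpr ⟨L (b i), rfl⟩⟩

theorem finrank_range_evalFamily_inf_pi_bot {b : ι → V}
    (hb : Submodule.span F (Set.range b) = ⊤) :
    finrank F ↥((LinearMap.range (evalFamily F K b)).restrictScalars F ⊓
        Submodule.pi Set.univ (fun _ : ι => Subalgebra.toSubmodule (⊥ : Subalgebra F K))) =
      finrank F V := by
  have hinj : Function.Injective (LinearMap.compRight F (Algebra.linearMap F K) :
      Dual F V →ₗ[F] V →ₗ[F] K) := fun _ _ h =>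
    LinearMap.ext fun v => (algebraMap F K).injective (LinearMap.congr_fun h v)
  rw [range_evalFamily_inf_pi_bot hb, LinearMap.finrank_range_of_inj, Subspace.dual_finrank_eq]
  exact (evalFamily_injective hb).comp hinj

end RationalPoints

theorem rational_points_of_conjugate_span_finrank_general
    (Fq K : Type) [Field Fq] [Fintype Fq] [Field K] [Fintype K] [Algebra Fq K]
    (h k : ℕ) (hk0 : 0 < k)
    (hrank : Module.finrank Fq K = h)
    (α : K) (hα : IntermediateField.adjoin Fq {α} = ⊤) :
    Module.finrank Fq
      ↥((Submodule.span K (Set.range (fun s : Fin h => fun i : Fin (h * k) =>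
            α ^ ((i : ℕ) * (Fintype.card Fq) ^ (s : ℕ))))).restrictScalars Fq ⊓
        Submodule.pi Set.univ
          (fun _ : Fin (h * k) => Subalgebra.toSubmodule (⊥ : Subalgebra Fq K)))
      = h := by
  subst hrank
  set E := evalFamily Fq K fun i : Fin (finrank Fq K * k) => α ^ (i : ℕ)
  have hconj : (fun s : Fin (finrank Fq K) => fun i : Fin (finrank Fq K * k) =>
      α ^ ((i : ℕ) * Fintype.card Fq ^ (s : ℕ))) =
      E ∘ fun s : Fin (finrank Fq K) =>
        ((FiniteField.frobeniusAlgHom Fq K) ^ (s : ℕ)).toLinearMap := by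
    ext s i
    simp [E, AlgHom.coe_pow, FiniteField.coe_frobeniusAlgHom, pow_iterate, pow_mul]
  rw [hconj, Set.range_comp, Submodule.span_image, span_frobeniusAlgHom_pow_eq_top,
    Submodule.map_top]
  exact finrank_range_evalFamily_inf_pi_bot
    (span_range_pow_eq_top_of_adjoin_eq_top hα (Nat.le_mul_of_pos_right _ hk0))

/-- the intersection of the span of the Frobenius conjugates of an
imaginary point of the normal rational curve with the rational subspace F_q^{hk}
has F_q-dimension h. -/
theorem rational_points_of_conjugate_span_finrank
    (Fq K : Type) [Field Fq] [Fintype Fq] [Field K] [Fintype K] [Algebra Fq K]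
    (h k : ℕ) (hh : 0 < h) (hk0 : 0 < k)
    (hrank : Module.finrank Fq K = h)
    (hq : h * k + 1 ≤ Fintype.card Fq)
    (α : K) (hα : IntermediateField.adjoin Fq {α} = ⊤) :
    Module.finrank Fq
      ↥((Submodule.span K (Set.range (fun s : Fin h => fun i : Fin (h * k) =>
            α ^ ((i : ℕ) * (Fintype.card Fq) ^ (s : ℕ))))).restrictScalars Fq ⊓
        Submodule.pi Set.univ
          (fun _ : Fin (h * k) => Subalgebra.toSubmodule (⊥ : Subalgebra Fq K)))
      = h :=
  rational_points_of_conjugate_span_finrank_general Fq K h k hk0 hrank α hα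
end

section
/- Let q ≥ hk+1 and let α₁, …, α_k ∈ F_{q^h} be elements generating F_{q^h} over F_q and lying in pairwise distinct orbits under the q-Frobenius x ↦ x^q. Then the hk × hk matrix whose rows are the vectors (1, α_r^{q^s}, α_r^{2q^s}, …, α_r^{(hk-1)q^s}) for r = 1,…,k and s = 0,…,h-1 is invertible. -/
section aux

variable {Fq K : Type} [Field Fq] [Fintype Fq] [Field K] [Fintype K] [Algebra Fq K]

/-- The map `x ↦ x ^ q ^ t` is injective on `K` when `q = card Fq`. -/
lemma frobIter_injective (t : ℕ) :
    Function.Injective (fun x : K => x ^ (Fintype.card Fq) ^ t) := by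
  set p := ringChar Fq with hp
  haveI : CharP Fq p := ringChar.charP Fq
  obtain ⟨n, hpp, hcard⟩ := FiniteField.card Fq p
  haveI : Fact p.Prime := ⟨hpp⟩
  haveI : CharP K p := charP_of_injective_algebraMap (algebraMap Fq K).injective p
  have key : ∀ x : K, x ^ (Fintype.card Fq) ^ t = (frobenius K p)^[(n : ℕ) * t] x := by
    intro x
    rw [iterate_frobenius, hcard, ← pow_mul]
  intro x y hxy
  simp only [key] at hxy
  exact Function.Injective.iterate (frobenius_inj K p) _ hxy

/-- If `α` generates `K` over `Fq`, `[K:Fq] = h`, and `α ^ q ^ d = α` with `0 < d < h`,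
we get a contradiction. -/
lemma fixed_contradiction (h : ℕ) (hrank : Module.finrank Fq K = h)
    (α : K) (hgen : IntermediateField.adjoin Fq {α} = ⊤)
    (d : ℕ) (hd0 : 0 < d) (hdh : d < h)
    (hfix : α ^ (Fintype.card Fq) ^ d = α) : False := by
  classical
  set q := Fintype.card Fq with hq
  set p := ringChar Fq with hp
  haveI : CharP Fq p := ringChar.charP Fq
  obtain ⟨n, hpp, hcard⟩ := FiniteField.card Fq p
  haveI : Fact p.Prime := ⟨hpp⟩
  haveI : CharP K p := charP_of_injective_algebraMap (algebraMap Fq K).injective p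
  have hq1 : 1 < q := Fintype.one_lt_card
  -- the ring hom x ↦ x ^ q ^ d
  let ψ : K →+* K := iterateFrobenius K p ((n : ℕ) * d)
  have hψ : ∀ x : K, ψ x = x ^ q ^ d := by
    intro x
    rw [show ψ x = x ^ p ^ ((n : ℕ) * d) from rfl, hq, hcard, ← pow_mul]
  -- fixed points form an intermediate field
  let F : IntermediateField Fq K :=
  { carrier := {x : K | ψ x = x}
    mul_mem' := fun {a b} ha hb => by
      simp only [Set.mem_setOf_eq, map_mul] at *
      rw [ha, hb]
    one_mem' := map_one ψ
    add_mem' := fun {a b} ha hb => by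
      simp only [Set.mem_setOf_eq, map_add] at *
      rw [ha, hb]
    zero_mem' := map_zero ψ
    inv_mem' := fun a ha => by
      simp only [Set.mem_setOf_eq, map_inv₀] at *
      rw [ha]
    algebraMap_mem' := fun x => by
      simp only [Set.mem_setOf_eq, hψ, ← map_pow, hq, FiniteField.pow_card_pow] }
  have hαF : α ∈ F := by
    show ψ α = α
    rw [hψ, hfix]
  have hFtop : F = ⊤ := top_le_iff.mp (hgen ▸ IntermediateField.adjoin_le_iff.mpr
    (Set.singleton_subset_iff.mpr hαF))
  have hall : ∀ x : K, x ^ q ^ d = x := by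
    intro x
    have : x ∈ F := hFtop ▸ IntermediateField.mem_top
    rw [← hψ x]; exact this
  -- take a generator of Kˣ
  obtain ⟨g, hg⟩ := IsCyclic.exists_generator (α := Kˣ)
  have horder : orderOf g = Fintype.card K - 1 := by
    rw [orderOf_eq_card_of_forall_mem_zpowers hg, Nat.card_eq_fintype_card,
      Fintype.card_units]
  have hqd1 : 1 ≤ q ^ d := Nat.one_le_pow _ _ (by omega)
  have hgfix : g ^ (q ^ d - 1) = 1 := by
    have h1 : (g : K) ^ q ^ d = (g : K) := hall g
    have h2 : g ^ (q ^ d) = g := Units.ext (by push_cast; exact h1)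
    have h3 : g ^ (q ^ d - 1) * g = g := by
      rw [← pow_succ, Nat.sub_add_cancel hqd1, h2]
    calc g ^ (q ^ d - 1) = g ^ (q ^ d - 1) * g * g⁻¹ := by group
    _ = 1 := by rw [h3]; group
  have hdvd : orderOf g ∣ q ^ d - 1 := orderOf_dvd_of_pow_eq_one hgfix
  have hcardK : Fintype.card K = q ^ h := by
    rw [hq, ← hrank]; exact Module.card_eq_pow_finrank
  have hqd2 : 2 ≤ q ^ d := by
    calc 2 = 2 ^ 1 := rfl
    _ ≤ q ^ d := Nat.pow_le_pow_left (by omega) 1 |>.trans (Nat.pow_le_pow_right (by omega) (by omega))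
  have hle : q ^ h - 1 ≤ q ^ d - 1 := by
    refine Nat.le_of_dvd (by omega) ?_
    rw [← hcardK, ← horder]; exact hdvd
  have hmul : q ^ d * q ≤ q ^ h := by
    calc q ^ d * q = q ^ (d + 1) := by rw [pow_succ]
    _ ≤ q ^ h := Nat.pow_le_pow_right (by omega) (by omega)
  have h2 : 2 ≤ q := hq1
  have : q ^ d * 2 ≤ q ^ d * q := Nat.mul_le_mul_left _ h2
  omega

end aux

/-- the hk × hk matrix of all Frobenius conjugates of the
Vandermonde rows (1, α_r^{q^s}, …, α_r^{(hk−1)q^s}) is invertible. -/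
theorem conjugate_vandermonde_isUnit_det
    (Fq K : Type) [Field Fq] [Fintype Fq] [Field K] [Fintype K] [Algebra Fq K]
    (h k : ℕ) (hh : 0 < h) (hk0 : 0 < k)
    (hrank : Module.finrank Fq K = h)
    (hq : h * k + 1 ≤ Fintype.card Fq)
    (α : Fin k → K)
    (hgen : ∀ r, IntermediateField.adjoin Fq {α r} = ⊤)
    (horb : ∀ r r', r ≠ r' → ∀ s : ℕ, α r ≠ (α r') ^ (Fintype.card Fq) ^ s) :
    IsUnit (Matrix.det (Matrix.of (fun j i : Fin (h * k) =>
      α ((finProdFinEquiv.symm j).2) ^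
        ((i : ℕ) * (Fintype.card Fq) ^ (((finProdFinEquiv.symm j).1 : Fin h) : ℕ))))) := by
  set q := Fintype.card Fq with hqdef
  set β : Fin (h * k) → K := fun j =>
    α ((finProdFinEquiv.symm j).2) ^ q ^ (((finProdFinEquiv.symm j).1 : Fin h) : ℕ) with hβ
  have hmat : (Matrix.of (fun j i : Fin (h * k) =>
      α ((finProdFinEquiv.symm j).2) ^
        ((i : ℕ) * q ^ (((finProdFinEquiv.symm j).1 : Fin h) : ℕ)))) =
      Matrix.vandermonde β := by
    ext j i
    simp only [Matrix.of_apply, Matrix.vandermonde_apply, hβ, ← pow_mul, mul_comm]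
  rw [hmat]
  rw [isUnit_iff_ne_zero]
  rw [Matrix.det_vandermonde_ne_zero_iff]
  -- injectivity of β
  have main : ∀ (s s' : ℕ) (r r' : Fin k), s ≤ s' →
      α r ^ q ^ s = α r' ^ q ^ s' → α r = α r' ^ q ^ (s' - s) := by
    intro s s' r r' hss' heq
    apply frobIter_injective (Fq := Fq) s
    show α r ^ q ^ s = (α r' ^ q ^ (s' - s)) ^ q ^ s
    rw [← pow_mul, ← pow_add, Nat.sub_add_cancel hss']
    exact heq
  intro j j' hjj'
  set s : ℕ := (((finProdFinEquiv.symm j).1 : Fin h) : ℕ) with hs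
  set s' : ℕ := (((finProdFinEquiv.symm j').1 : Fin h) : ℕ) with hs'
  set r : Fin k := (finProdFinEquiv.symm j).2 with hr
  set r' : Fin k := (finProdFinEquiv.symm j').2 with hr'
  have heq : α r ^ q ^ s = α r' ^ q ^ s' := hjj'
  have hsh : s < h := (finProdFinEquiv.symm j).1.isLt
  have hs'h : s' < h := (finProdFinEquiv.symm j').1.isLt
  have hrr' : r = r' := by
    by_contra hne
    rcases le_total s s' with hle | hle
    · exact horb r r' hne (s' - s) (main s s' r r' hle heq)
    · exact horb r' r (Ne.symm hne) (s - s') (main s' s r' r hle heq.symm)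
  have hss' : s = s' := by
    by_contra hne
    rcases Nat.lt_or_ge s s' with hlt | hge
    · have := main s s' r r' (le_of_lt hlt) heq
      rw [hrr'] at this
      exact fixed_contradiction h hrank (α r') (hgen r') (s' - s)
        (by omega) (by omega) this.symm
    · have hlt : s' < s := by omega
      have := main s' s r' r (le_of_lt hlt) heq.symm
      rw [hrr'] at this
      exact fixed_contradiction h hrank (α r') (hgen r') (s - s')
        (by omega) (by omega) this.symm
  have : finProdFinEquiv.symm j = finProdFinEquiv.symm j' := by
    apply Prod.ext
    · exact Fin.ext (by rw [← hs, ← hs', hss'])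
    · exact hrr'
  exact finProdFinEquiv.symm.injective this
end

section
/- Let q be a prime power, h, k, n positive integers with hk ≤ n ≤ |Λ_{h,q}|, and let α₁, …, α_n be distinct elements of F_{q^h} each generating F_{q^h} over F_q and lying in pairwise distinct q-Frobenius orbits. Then the code S = {(f(α₁), …, f(α_n)) : f ∈ F_q[X], deg f < hk} ⊆ F_{q^h}^n is an F_q-linear code of F_q-dimension hk and minimum Hamming distance n − k + 1; in particular it attains the Singleton bound q^{hk} ≤ q^{h(n−d+1)} with equality (it is an additive MDS code). -/
/-!
Since the Galois group of `K / F_q` is generated by Frobenius, the roots of the minimal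
polynomial of `α_j` are the conjugates `α_j ^ q ^ s`. So the minimal polynomials of the `α_j` are
pairwise coprime, and each has degree `h` because `α_j` generates `K`. A nonzero `f` of
degree `< hk` is divisible by the product of the minimal polynomials of the `α_j` at which it
vanishes, hence vanishes at fewer than `k` of them; the product of `k - 1` of these minimal
polynomials vanishes at exactly those `k - 1` points and shows that the bound is attained. The
distance bound also makes evaluation injective on polynomials of degree `< hk`, which gives the
dimension.
-/

open Polynomial Finset IntermediateField

theorem hammingNorm_add_card_filter_eq_zero {ι β : Type*} [Fintype ι] [Zero β] [DecidableEq β]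
    (x : ι → β) : hammingNorm x + #{i | x i = 0} = Fintype.card ι := by
  rw [hammingNorm, add_comm]
  exact card_filter_add_card_filter_not _

theorem Submodule.finrank_map_of_forall_ne_zero {R M N : Type*} [Ring R] [StrongRankCondition R]
    [AddCommGroup M] [Module R M] [AddCommGroup N] [Module R N] {f : M →ₗ[R] N}
    {p : Submodule R M} (hf : ∀ x ∈ p, x ≠ 0 → f x ≠ 0) :
    Module.finrank R (p.map f) = Module.finrank R p := by
  rw [← LinearMap.range_domRestrict]
  refine LinearMap.finrank_range_of_inj ((injective_iff_map_eq_zero _).2 fun x hx => ?_)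
  by_contra hx0
  exact hf x x.2 (by simpa using hx0) hx

theorem natDegree_minpoly_of_adjoin_eq_top {F K : Type*} [Field F] [Field K] [Algebra F K]
    {x : K} (hint : IsIntegral F x) (hx : F⟮x⟯ = ⊤) :
    (minpoly F x).natDegree = Module.finrank F K := by
  rw [← adjoin.finrank hint, hx, finrank_top']

section FrobeniusOrbits

variable {F K ι : Type*} [Field F] [Field K] [Finite K] [Algebra F K] {α : ι → K}

theorem natDegree_prod_minpoly (hgen : ∀ i, F⟮α i⟯ = ⊤) (s : Finset ι) :
    (∏ i ∈ s, minpoly F (α i)).natDegree = #s * Module.finrank F K := by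
  rw [natDegree_prod _ _ fun i _ => minpoly.ne_zero (IsIntegral.of_finite F (α i)),
    sum_congr rfl fun i _ => natDegree_minpoly_of_adjoin_eq_top (IsIntegral.of_finite F _) (hgen i),
    sum_const, smul_eq_mul]

variable [Fintype F]

theorem exists_eq_pow_card_pow_of_aeval_minpoly_eq_zero {x y : K}
    (hy : aeval y (minpoly F x) = 0) : ∃ s : ℕ, y = x ^ Fintype.card F ^ s := by
  obtain ⟨σ, hσ⟩ := minpoly.exists_algEquiv_of_root' (Algebra.IsAlgebraic.isAlgebraic x) hy
  obtain ⟨s, rfl⟩ := (FiniteField.bijective_frobeniusAlgEquivOfAlgebraic_pow F K).2 σ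
  refine ⟨s, ?_⟩
  rw [← hσ, AlgEquiv.coe_pow, FiniteField.coe_frobeniusAlgEquivOfAlgebraic_iterate]

theorem isCoprime_minpoly_of_forall_ne_pow_card_pow {x y : K}
    (hxy : ∀ s : ℕ, x ≠ y ^ Fintype.card F ^ s) : IsCoprime (minpoly F x) (minpoly F y) := by
  rw [(minpoly.irreducible (IsIntegral.of_finite F x)).coprime_iff_not_dvd]
  intro hdvd
  obtain ⟨s, hs⟩ := exists_eq_pow_card_pow_of_aeval_minpoly_eq_zero
    (aeval_eq_zero_of_dvd_aeval_eq_zero hdvd (minpoly.aeval F x))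
  exact hxy s hs

theorem aeval_prod_minpoly_eq_zero_iff
    (horb : Pairwise fun i j => ∀ s : ℕ, α i ≠ α j ^ Fintype.card F ^ s)
    (s : Finset ι) (j : ι) :
    aeval (α j) (∏ i ∈ s, minpoly F (α i)) = 0 ↔ j ∈ s := by
  rw [map_prod, prod_eq_zero_iff]
  refine ⟨fun ⟨i, hi, hroot⟩ => ?_, fun hj => ⟨j, hj, minpoly.aeval F (α j)⟩⟩
  by_contra hj
  obtain ⟨t, ht⟩ := exists_eq_pow_card_pow_of_aeval_minpoly_eq_zero hroot
  exact horb (ne_of_mem_of_not_mem hi hj).symm t ht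

variable [Fintype ι] [DecidableEq K]

theorem card_filter_aeval_eq_zero_mul_finrank_le
    (hgen : ∀ i, F⟮α i⟯ = ⊤)
    (horb : Pairwise fun i j => ∀ s : ℕ, α i ≠ α j ^ Fintype.card F ^ s)
    {f : F[X]} (hf : f ≠ 0) :
    #{i | aeval (α i) f = 0} * Module.finrank F K ≤ f.natDegree := by
  have hdvd : ∏ i ∈ {i | aeval (α i) f = 0}, minpoly F (α i) ∣ f :=
    prod_dvd_of_coprime
      (fun i _ j _ hij => isCoprime_minpoly_of_forall_ne_pow_card_pow (horb hij))
      (fun i hi => minpoly.dvd F _ (mem_filter.1 hi).2)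
  rw [← natDegree_prod_minpoly hgen]
  exact natDegree_le_of_dvd hdvd hf

theorem sub_add_one_le_hammingNorm_aeval (hgen : ∀ i, F⟮α i⟯ = ⊤)
    (horb : Pairwise fun i j => ∀ s : ℕ, α i ≠ α j ^ Fintype.card F ^ s)
    {k : ℕ} (hk : k ≤ Fintype.card ι) {f : F[X]} (hf : f ≠ 0)
    (hdeg : f.natDegree < k * Module.finrank F K) :
    Fintype.card ι - k + 1 ≤ hammingNorm (fun i => aeval (α i) f) := by
  have hzeros : #{i | aeval (α i) f = 0} < k :=
    Nat.lt_of_mul_lt_mul_right <|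
      (card_filter_aeval_eq_zero_mul_finrank_le hgen horb hf).trans_lt hdeg
  have := hammingNorm_add_card_filter_eq_zero fun i => aeval (α i) f
  omega

theorem hammingNorm_aeval_prod_minpoly
    (horb : Pairwise fun i j => ∀ s : ℕ, α i ≠ α j ^ Fintype.card F ^ s) (s : Finset ι) :
    hammingNorm (fun i => aeval (α i) (∏ i ∈ s, minpoly F (α i))) = Fintype.card ι - #s := by
  classical
  have := hammingNorm_add_card_filter_eq_zero fun i => aeval (α i) (∏ i ∈ s, minpoly F (α i))
  simp only [aeval_prod_minpoly_eq_zero_iff horb, filter_mem_eq_inter, univ_inter] at this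
  omega

end FrobeniusOrbits

/-- the evaluation code S_{h,k,q}(α) (evaluating F_q-polynomials of
degree < hk at generators α₁, …, α_n lying in pairwise distinct Frobenius orbits)
is an F_q-linear code of F_q-dimension hk and minimum Hamming distance n − k + 1
(an additive MDS code). -/
theorem sublinear_RS_code_is_MDS
    (Fq K : Type) [Field Fq] [Fintype Fq] [Field K] [Fintype K] [DecidableEq K]
    [Algebra Fq K]
    (h k n : ℕ) (hh : 0 < h) (hk0 : 0 < k)
    (hrank : Module.finrank Fq K = h)
    (hn : h * k ≤ n)
    (α : Fin n → K)
    (hgen : ∀ r, IntermediateField.adjoin Fq {α r} = ⊤)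
    (horb : ∀ r r', r ≠ r' → ∀ s : ℕ, α r ≠ (α r') ^ (Fintype.card Fq) ^ s) :
    ∀ L : Polynomial Fq →ₗ[Fq] (Fin n → K),
      L = LinearMap.pi (fun i => (Polynomial.aeval (α i)).toLinearMap) →
      Module.finrank Fq ↥(Submodule.map L (Polynomial.degreeLT Fq (h * k))) = h * k ∧
      (∀ f ∈ Polynomial.degreeLT Fq (h * k), f ≠ 0 →
        n - k + 1 ≤ hammingNorm (L f)) ∧
      (∃ f ∈ Polynomial.degreeLT Fq (h * k), f ≠ 0 ∧
        hammingNorm (L f) = n - k + 1) := by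
  rintro L rfl
  have hkn : k ≤ n := le_trans (Nat.le_mul_of_pos_left k hh) hn
  have horb' : Pairwise fun i j => ∀ s : ℕ, α i ≠ α j ^ Fintype.card Fq ^ s :=
    fun i j hij => horb i j hij
  have hdist : ∀ f ∈ degreeLT Fq (h * k), f ≠ 0 →
      n - k + 1 ≤ hammingNorm (fun i => aeval (α i) f) := by
    intro f hf hf0
    rw [mem_degreeLT, degree_eq_natDegree hf0, Nat.cast_lt, mul_comm, ← hrank] at hf
    simpa using sub_add_one_le_hammingNorm_aeval hgen horb' (by rwa [Fintype.card_fin]) hf0 hf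
  refine ⟨?_, hdist, ?_⟩
  · rw [Submodule.finrank_map_of_forall_ne_zero, (degreeLTEquiv Fq (h * k)).finrank_eq,
      Module.finrank_fin_fun]
    exact fun f hf hf0 => hammingNorm_pos_iff.1 ((n - k).succ_pos.trans_le (hdist f hf hf0))
  · obtain ⟨T, -, hT⟩ := exists_subset_card_eq (s := (univ : Finset (Fin n))) (n := k - 1)
      (by rw [card_univ, Fintype.card_fin]; omega)
    have hprod0 : ∏ i ∈ T, minpoly Fq (α i) ≠ 0 :=
      prod_ne_zero_iff.2 fun i _ => minpoly.ne_zero (IsIntegral.of_finite Fq (α i))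
    refine ⟨∏ i ∈ T, minpoly Fq (α i), ?_, hprod0, ?_⟩
    · rw [mem_degreeLT, degree_eq_natDegree hprod0, Nat.cast_lt, natDegree_prod_minpoly hgen, hT,
        hrank, mul_comm h]
      exact Nat.mul_lt_mul_of_pos_right (by omega) hh
    · show hammingNorm (fun i => aeval (α i) (∏ i ∈ T, minpoly Fq (α i))) = n - k + 1
      rw [hammingNorm_aeval_prod_minpoly horb', hT, Fintype.card_fin]
      omega
end

section
/- Let q be a prime power with q ≥ hk + 1, h ≥ 2. Suppose B*(x, y) = Σ_{i,j=1}^{hk} γ_{i,j} x_i y_j is a nonzero bilinear form on F_{q^h}^{hk} such that B*(v_α, v_{α^q}) = 0 for every α ∈ F_{q^h} generating F_{q^h} over F_q, where v_β = (1, β, β², …, β^{hk−1}). Then the polynomial f(Z) = Σ_{i,j} γ_{i,j} Z^{i−1} Z^{q(j−1)} = Σ_{i,j} γ_{i,j} Z^{(i−1)+q(j−1)} is a nonzero polynomial of degree at most (hk−1)(q+1) with at least q^h − q^{h-1} distinct roots; in particular (hk−1)(q+1) ≥ q^h − q^{h-1} must hold, which fails for q ≥ hk+1 and h ≥ 2.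 Hence no such nonzero bilinear form exists. -/
/-!
Write `q = |F_q|`, `h = [K : F_q]` and `n = hk`. The form `B` with Gram matrix `M` is zero
exactly when the polynomial `f = Σ M i j X^(i + q j)` is zero: since `n ≤ q`, the exponents
`i + q j` are pairwise distinct, so the coefficients of `f` are the entries of `M`. By
hypothesis `f(α) = B(v_α, v_{α^q})` vanishes at every primitive element `α`. Every other `α`
lies in a proper subfield `F_{q^d}`, `1 ≤ d < h`, hence is a root of `X^(q^d) - X`. So
`f · ∏_{1 ≤ d < h} (X^(q^d) - X)` vanishes on all of `K`, yet its degree is at most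
`(n - 1)(q + 1) + q + ⋯ + q^(h-1) < q^h = |K|`; it is therefore zero, and so is `f`.
-/

open Polynomial Finset Module

namespace Matrix

variable {R : Type*} [CommSemiring R] {n : ℕ}

noncomputable def frobeniusTwistedPoly (q : ℕ) (M : Matrix (Fin n) (Fin n) R) : R[X] :=
  ∑ i : Fin n, ∑ j : Fin n, monomial ((i : ℕ) + q * j) (M i j)

theorem eval_frobeniusTwistedPoly (q : ℕ) (M : Matrix (Fin n) (Fin n) R) (α : R) :
    (M.frobeniusTwistedPoly q).eval α =
      toLinearMap₂' R M (fun i => α ^ (i : ℕ)) (fun j => (α ^ q) ^ (j : ℕ)) := by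
  simp only [frobeniusTwistedPoly, toLinearMap₂'_apply, eval_finsetSum, eval_monomial,
    smul_eq_mul, pow_add, pow_mul]
  exact sum_congr rfl fun i _ => sum_congr rfl fun j _ => by ring

theorem natDegree_frobeniusTwistedPoly_le (q : ℕ) (M : Matrix (Fin n) (Fin n) R) :
    (M.frobeniusTwistedPoly q).natDegree ≤ (n - 1) * (q + 1) := by
  refine natDegree_sum_le_of_forall_le _ _ fun i _ => natDegree_sum_le_of_forall_le _ _ fun j _ =>
    (natDegree_monomial_le _).trans ?_
  have hi : (i : ℕ) ≤ n - 1 := by omega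
  have hj : (j : ℕ) ≤ n - 1 := by omega
  nlinarith

theorem coeff_frobeniusTwistedPoly {q : ℕ} (hnq : n ≤ q) (M : Matrix (Fin n) (Fin n) R)
    (i j : Fin n) : (M.frobeniusTwistedPoly q).coeff (i + q * j) = M i j := by
  have hexp : ∀ i' j' : Fin n, (i' + q * j' : ℕ) = i + q * j ↔ i' = i ∧ j' = j := by
    intro i' j'
    refine ⟨fun h => ?_, by rintro ⟨rfl, rfl⟩; rfl⟩
    have hi : (i' : ℕ) = i := by
      simpa [Nat.add_mul_mod_self_left, Nat.mod_eq_of_lt (i'.2.trans_le hnq),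
        Nat.mod_eq_of_lt (i.2.trans_le hnq)] using congrArg (· % q) h
    rw [hi, Nat.add_left_cancel_iff] at h
    exact ⟨Fin.ext hi, Fin.ext (Nat.eq_of_mul_eq_mul_left (by omega) h)⟩
  simp [frobeniusTwistedPoly, finsetSum_coeff, coeff_monomial, hexp, ite_and, sum_ite_irrel]

end Matrix

section PrimitiveElements

variable {Fq K : Type*} [Field Fq] [Fintype Fq] [Field K] [Fintype K] [Algebra Fq K]

theorem FiniteField.exists_pow_card_pow_eq_self_of_adjoin_ne_top {α : K}
    (hα : IntermediateField.adjoin Fq {α} ≠ ⊤) :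
    ∃ d ∈ Ico 1 (finrank Fq K), α ^ Fintype.card Fq ^ d = α := by
  classical
  set L := IntermediateField.adjoin Fq {α}
  have hlt : finrank Fq L < finrank Fq K := by
    refine lt_of_le_of_ne (Submodule.finrank_le (Subalgebra.toSubmodule L.toSubalgebra)) ?_
    exact fun h => hα (IntermediateField.eq_of_le_of_finrank_eq le_top
      (h.trans IntermediateField.finrank_top'.symm))
  refine ⟨finrank Fq L, mem_Ico.2 ⟨finrank_pos, hlt⟩, ?_⟩
  have hpow := FiniteField.pow_card (⟨α, IntermediateField.mem_adjoin_simple_self Fq α⟩ : L)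
  rw [Module.card_eq_pow_finrank (K := Fq)] at hpow
  exact congrArg Subtype.val hpow

theorem Polynomial.eq_zero_of_eval_eq_zero_of_adjoin_eq_top (f : K[X])
    (hdeg : f.natDegree + ∑ d ∈ Ico 1 (finrank Fq K), Fintype.card Fq ^ d <
      Fintype.card Fq ^ finrank Fq K)
    (hf : ∀ α : K, IntermediateField.adjoin Fq {α} = ⊤ → f.eval α = 0) : f = 0 := by
  set q := Fintype.card Fq
  set g : K[X] := ∏ d ∈ Ico 1 (finrank Fq K), (X ^ q ^ d - X)
  have hfactor : ∀ d ∈ Ico 1 (finrank Fq K), (X ^ q ^ d - X : K[X]) ≠ 0 := fun d hd =>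
    FiniteField.X_pow_card_pow_sub_X_ne_zero K (by grind) Fintype.one_lt_card
  have hg : g ≠ 0 := prod_ne_zero_iff.2 hfactor
  have hgdeg : g.natDegree = ∑ d ∈ Ico 1 (finrank Fq K), q ^ d := by
    rw [natDegree_prod _ _ hfactor]
    exact sum_congr rfl fun d hd =>
      FiniteField.X_pow_card_pow_sub_X_natDegree_eq K (by grind) Fintype.one_lt_card
  have hroots : ∀ α : K, (f * g).eval α = 0 := by
    intro α
    by_cases hα : IntermediateField.adjoin Fq {α} = ⊤
    · rw [eval_mul, hf α hα, zero_mul]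
    · obtain ⟨d, hd, hαd⟩ := FiniteField.exists_pow_card_pow_eq_self_of_adjoin_ne_top hα
      rw [eval_mul, eval_prod, prod_eq_zero hd (by simp [q, hαd]), mul_zero]
  have hfg : f * g = 0 := by
    refine eq_zero_of_natDegree_lt_card_of_eval_eq_zero _ Function.injective_id hroots ?_
    calc (f * g).natDegree ≤ f.natDegree + g.natDegree := natDegree_mul_le
      _ < Fintype.card K := by rwa [hgdeg, Module.card_eq_pow_finrank (K := Fq)]
  exact (mul_eq_zero.1 hfg).resolve_right hg

end PrimitiveElements

theorem Nat.mul_succ_add_sum_Ico_pow_lt {m q h : ℕ} (hmq : m + 2 ≤ q) (hh : 2 ≤ h) :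
    m * (q + 1) + ∑ d ∈ Ico 1 h, q ^ d < q ^ h := by
  induction h, hh using Nat.le_induction with
  | base =>
    simp only [Ico_succ_singleton, sum_singleton, pow_one]
    nlinarith
  | succ h hh ih =>
    rw [sum_Ico_succ_top (by omega), pow_succ]
    linarith [Nat.mul_le_mul_left (q ^ h) (show 2 ≤ q by omega)]

theorem no_bilinear_form_vanishing_on_conjugate_pairs_general
    (Fq K : Type) [Field Fq] [Fintype Fq] [Field K] [Fintype K] [Algebra Fq K]
    (h k : ℕ) (hh : 2 ≤ h)
    (hrank : Module.finrank Fq K = h)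
    (hq : h * k + 1 ≤ Fintype.card Fq)
    (B : (Fin (h * k) → K) →ₗ[K] (Fin (h * k) → K) →ₗ[K] K)
    (hB : ∀ α : K, IntermediateField.adjoin Fq {α} = ⊤ →
      B (fun i => α ^ (i : ℕ)) (fun i => (α ^ (Fintype.card Fq)) ^ (i : ℕ)) = 0) :
    B = 0 := by
  set M := LinearMap.toMatrix₂' K B
  have hBM : B = Matrix.toLinearMap₂' K M := (Matrix.toLinearMap₂'_toMatrix' B).symm
  -- Truncated subtraction: at `k = 0` this needs `2 ≤ |F_q|`.
  have hq2 : h * k - 1 + 2 ≤ Fintype.card Fq := by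
    have := Fintype.one_lt_card (α := Fq)
    omega
  have hf : M.frobeniusTwistedPoly (Fintype.card Fq) = 0 := by
    refine eq_zero_of_eval_eq_zero_of_adjoin_eq_top (Fq := Fq) _ ?_ fun α hα => ?_
    · rw [hrank]
      exact (Nat.add_le_add_right (M.natDegree_frobeniusTwistedPoly_le _) _).trans_lt
        (Nat.mul_succ_add_sum_Ico_pow_lt hq2 hh)
    · rw [Matrix.eval_frobeniusTwistedPoly, ← hBM, hB α hα]
  have hM : M = 0 := by
    ext i j
    rw [← M.coeff_frobeniusTwistedPoly (Nat.le_of_succ_le hq) i j, hf, coeff_zero,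
      Matrix.zero_apply]
  rw [hBM, hM, map_zero]

/-- for q ≥ hk+1 and h ≥ 2, no nonzero bilinear form on F_{q^h}^{hk}
vanishes on all pairs (v_α, v_{α^q}) with α a generator of F_{q^h} over F_q. -/
theorem no_bilinear_form_vanishing_on_conjugate_pairs
    (Fq K : Type) [Field Fq] [Fintype Fq] [Field K] [Fintype K] [Algebra Fq K]
    (h k : ℕ) (hh : 2 ≤ h) (hk0 : 0 < k)
    (hrank : Module.finrank Fq K = h)
    (hq : h * k + 1 ≤ Fintype.card Fq)
    (B : (Fin (h * k) → K) →ₗ[K] (Fin (h * k) → K) →ₗ[K] K)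
    (hB : ∀ α : K, IntermediateField.adjoin Fq {α} = ⊤ →
      B (fun i => α ^ (i : ℕ)) (fun i => (α ^ (Fintype.card Fq)) ^ (i : ℕ)) = 0) :
    B = 0 :=
  no_bilinear_form_vanishing_on_conjugate_pairs_general Fq K h k hh hrank hq B hB
end
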